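/- Let N be a positive integer and θ ∈ (0, π/2). If λ ∈ ℂ is an eigenvalue of U_psw(θ), then λ satisfies the equation 1 − (−λ^(−1)/cosθ)^N = (−1)^(N−1)·(1 − (−λ/cosθ)^N). -/

import Mathlib

/-!
`U_psw(θ)` is unitary, so `|λ| = 1`. Write `c = cos θ`, `s = sin θ` and an eigenvector as
`(a_n, b_n)`. The coin-1 rows give `b_n (λ + c ωⁿ) = s ωⁿ a_n`, where `λ + c ωⁿ ≠ 0` because
`|c ωⁿ| = c < 1 = |λ|`; substituting into the coin-0 rows and using `c² + s² = 1` gives the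
transfer relation `a_n (cλ + ωⁿ) = λ a_{n+1} (λ + c ωⁿ)`. A zero of `a` would propagate around
the cycle and force `v = 0`, so all `a_n ≠ 0` and the product of the relations over `ℤ/Nℤ`
gives `∏ (cλ + ωⁿ) = λᴺ ∏ (λ + c ωⁿ)`. Evaluating both sides with
`∏ₙ (x + β ωⁿ) = xᴺ - (-β)ᴺ` yields the equation.
-/

open Complex

/-- `ω = exp(2πi/N)`. -/
noncomputable def omegaN (N : ℕ) : ℂ := Complex.exp (2 * Real.pi * Complex.I / N)

/-- The phase-space quantum walk operator `U_psw(θ)`, a `2N × 2N` matrix indexed by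
(coin, walker) pairs, with block form `[[cosθ·T, sinθ·T],[sinθ·T̃, −cosθ·T̃]]`,
where `T` is the cyclic shift (`T|n⟩ = |n+1⟩`) and `T̃` the diagonal matrix with
`T̃|n⟩ = ω^n|n⟩`. -/
noncomputable def Upsw (N : ℕ) (θ : ℝ) :
    Matrix (Fin 2 × ZMod N) (Fin 2 × ZMod N) ℂ := fun p q =>
  if p.1 = 0 then
    (if q.1 = 0 then (Real.cos θ : ℂ) else (Real.sin θ : ℂ)) *
      (if p.2 = q.2 + 1 then 1 else 0)
  else
    (if q.1 = 0 then (Real.sin θ : ℂ) else (-Real.cos θ : ℂ)) *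
      (if p.2 = q.2 then omegaN N ^ (q.2.val) else 0)

open scoped Matrix

theorem Matrix.exists_mulVec_eq_smul_of_mem_spectrum {n K : Type*} [Fintype n] [DecidableEq n]
    [Field K] {A : Matrix n n K} {μ : K} (hμ : μ ∈ spectrum K A) :
    ∃ v, v ≠ 0 ∧ A *ᵥ v = μ • v := by
  rw [← Matrix.spectrum_toLin', ← Module.End.hasEigenvalue_iff_mem_spectrum] at hμ
  obtain ⟨v, hv⟩ := hμ.exists_hasEigenvector
  exact ⟨v, hv.2, by rw [← Matrix.toLin'_apply, hv.apply_eq_smul]⟩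

theorem ZMod.forall_of_add_one {N : ℕ} [NeZero N] {P : ZMod N → Prop} {m : ZMod N} (hm : P m)
    (h : ∀ n, P n → P (n + 1)) (n : ZMod N) : P n := by
  have hP : ∀ k : ℕ, P (m + k) := by
    intro k
    induction k with
    | zero => simpa using hm
    | succ k ih => simpa [add_assoc] using h _ ih
  simpa using hP (n - m).val

theorem ZMod.prod_val_eq_prod_range {M : Type*} [CommMonoid M] (N : ℕ) [NeZero N] (f : ℕ → M) :
    ∏ n : ZMod N, f n.val = ∏ i ∈ Finset.range N, f i := by
  obtain ⟨M, rfl⟩ := Nat.exists_eq_succ_of_ne_zero (NeZero.ne N)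
  exact Fin.prod_univ_eq_prod_range f (M + 1)

theorem IsPrimitiveRoot.prod_range_add_mul_pow {R : Type*} [CommRing R] [IsDomain R] {ζ : R}
    {N : ℕ} (hζ : IsPrimitiveRoot ζ N) (hN : 0 < N) (x β : R) :
    ∏ i ∈ Finset.range N, (x + β * ζ ^ i) = x ^ N - (-β) ^ N := by
  have h := congrArg (Polynomial.eval x) (X_pow_sub_C_eq_prod hζ hN (rfl : (-β) ^ N = _))
  simp only [Polynomial.eval_sub, Polynomial.eval_pow, Polynomial.eval_X, Polynomial.eval_C,
    Polynomial.eval_prod] at h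
  rw [h]
  exact Finset.prod_congr rfl fun i _ => by ring

theorem Fintype.prod_eq_prod_of_mul_eq_mul_add {G M : Type*} [AddGroup G] [Fintype G]
    [CommMonoidWithZero M] [Nontrivial M] [IsCancelMulZero M] (g : G) {a p q : G → M}
    (ha : ∀ n, a n ≠ 0) (h : ∀ n, a n * p n = a (n + g) * q n) : ∏ n, p n = ∏ n, q n := by
  refine mul_left_cancel₀ (a := ∏ n, a n) (Finset.prod_ne_zero_iff.2 fun n _ => ha n) ?_
  calc (∏ n, a n) * ∏ n, p n = ∏ n, a (n + g) * q n := by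
        rw [← Finset.prod_mul_distrib]; exact Finset.prod_congr rfl fun n _ => h n
    _ = (∏ n, a n) * ∏ n, q n := by
        rw [Finset.prod_mul_distrib,
          Fintype.prod_equiv (Equiv.addRight g) (fun n => a (n + g)) a fun _ => rfl]

theorem add_mul_ne_zero_of_norm_eq_one {lam z c : ℂ} (hlam : ‖lam‖ = 1) (hz : ‖z‖ = 1)
    (hc : ‖c‖ < 1) : lam + c * z ≠ 0 := by
  intro h
  have : ‖lam‖ = ‖c‖ * ‖z‖ := by rw [eq_neg_of_add_eq_zero_left h, norm_neg, norm_mul]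
  rw [hlam, hz] at this
  linarith

theorem eigenvalue_equation_of_prod {N : ℕ} (hN : N ≠ 0) {lam c : ℂ} (hlam : lam ≠ 0)
    (hc : c ≠ 0)
    (h : (c * lam) ^ N - (-1) ^ N = lam ^ N * (lam ^ N - (-c) ^ N)) :
    1 - (-(lam⁻¹ / c)) ^ N = (-1 : ℂ) ^ (N - 1) * (1 - (-(lam / c)) ^ N) := by
  obtain ⟨M, rfl⟩ := Nat.exists_eq_add_one_of_ne_zero hN
  rw [neg_pow c] at h
  rw [Nat.add_sub_cancel, neg_pow (lam⁻¹ / c), neg_pow (lam / c), div_pow, div_pow, inv_pow]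
  field_simp
  have hs : (-1 : ℂ) ^ M * (-1) ^ M = 1 := by rw [← mul_pow]; simp
  linear_combination h - lam ^ (M + 1) * lam ^ (M + 1) * hs

theorem norm_omegaN (N : ℕ) : ‖omegaN N‖ = 1 := by
  rw [omegaN, Complex.norm_exp]
  simp

theorem isPrimitiveRoot_omegaN (N : ℕ) [NeZero N] : IsPrimitiveRoot (omegaN N) N :=
  Complex.isPrimitiveRoot_exp N (NeZero.ne N)

theorem prod_add_mul_omegaN_pow_val (N : ℕ) [NeZero N] (x β : ℂ) :
    ∏ n : ZMod N, (x + β * omegaN N ^ n.val) = x ^ N - (-β) ^ N := by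
  rw [ZMod.prod_val_eq_prod_range N fun i => x + β * omegaN N ^ i,
    (isPrimitiveRoot_omegaN N).prod_range_add_mul_pow (Nat.pos_of_neZero N)]

theorem Upsw_mem_unitary (N : ℕ) [NeZero N] (θ : ℝ) :
    Upsw N θ ∈ unitary (Matrix (Fin 2 × ZMod N) (Fin 2 × ZMod N) ℂ) := by
  refine Matrix.mem_unitaryGroup_iff'.2 ?_
  have hω0 : omegaN N ≠ 0 := Complex.exp_ne_zero _
  have hω : (starRingEnd ℂ) (omegaN N) = (omegaN N)⁻¹ :=
    (Complex.inv_eq_conj (norm_omegaN N)).symm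
  ext ⟨i, m⟩ ⟨j, k⟩
  obtain rfl | hkm := eq_or_ne k m
  · fin_cases i <;> fin_cases j <;>
      simp [Matrix.mul_apply, Fintype.sum_prod_type, Upsw, -Complex.ofReal_cos,
        -Complex.ofReal_sin, Complex.conj_ofReal, hω] <;>
      field_simp <;> norm_cast <;> simp
  · fin_cases i <;> fin_cases j <;>
      simp [Matrix.mul_apply, Fintype.sum_prod_type, Upsw, hkm, hkm.symm]

section Eigenvector

variable {N : ℕ} [NeZero N] {θ : ℝ}

theorem Upsw_mulVec_apply_zero_add_one (v : Fin 2 × ZMod N → ℂ) (n : ZMod N) :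
    (Upsw N θ *ᵥ v) (0, n + 1) = Real.cos θ * v (0, n) + Real.sin θ * v (1, n) := by
  simp [Matrix.mulVec, dotProduct, Fintype.sum_prod_type, Upsw, -Complex.ofReal_cos,
    -Complex.ofReal_sin]

theorem Upsw_mulVec_apply_one (v : Fin 2 × ZMod N → ℂ) (n : ZMod N) :
    (Upsw N θ *ᵥ v) (1, n) =
      omegaN N ^ n.val * (Real.sin θ * v (0, n) - Real.cos θ * v (1, n)) := by
  simp [Matrix.mulVec, dotProduct, Fintype.sum_prod_type, Upsw, -Complex.ofReal_cos,
    -Complex.ofReal_sin]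
  ring

variable {lam : ℂ} {v : Fin 2 × ZMod N → ℂ}

theorem Upsw_eigenvector_coin_one (hv : Upsw N θ *ᵥ v = lam • v) (n : ZMod N) :
    v (1, n) * (lam + Real.cos θ * omegaN N ^ n.val) =
      Real.sin θ * omegaN N ^ n.val * v (0, n) := by
  have h := Upsw_mulVec_apply_one (θ := θ) v n
  rw [hv, Pi.smul_apply, smul_eq_mul] at h
  linear_combination h

theorem Upsw_eigenvector_transfer (hv : Upsw N θ *ᵥ v = lam • v) (n : ZMod N) :
    v (0, n) * (Real.cos θ * lam + omegaN N ^ n.val) =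
      v (0, n + 1) * (lam * (lam + Real.cos θ * omegaN N ^ n.val)) := by
  have h := Upsw_mulVec_apply_zero_add_one (θ := θ) v n
  rw [hv, Pi.smul_apply, smul_eq_mul] at h
  have hcs : (Real.cos θ : ℂ) ^ 2 + (Real.sin θ : ℂ) ^ 2 = 1 :=
    mod_cast Real.cos_sq_add_sin_sq θ
  linear_combination -(lam + Real.cos θ * omegaN N ^ n.val) * h
    - Real.sin θ * Upsw_eigenvector_coin_one hv n - omegaN N ^ n.val * v (0, n) * hcs

theorem Upsw_eigenvector_coin_zero_ne_zero (hv : Upsw N θ *ᵥ v = lam • v) (hv0 : v ≠ 0)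
    (hlam : lam ≠ 0) (hpole : ∀ n : ZMod N, lam + Real.cos θ * omegaN N ^ n.val ≠ 0)
    (n : ZMod N) : v (0, n) ≠ 0 := by
  intro hn
  have hzero : ∀ m, v (0, m) = 0 := ZMod.forall_of_add_one hn fun m hm => by
    have h := Upsw_eigenvector_transfer hv m
    rw [hm, zero_mul, eq_comm] at h
    exact (mul_eq_zero.1 h).resolve_right (mul_ne_zero hlam (hpole m))
  have hone (m : ZMod N) : v (1, m) = 0 := by
    have h := Upsw_eigenvector_coin_one hv m
    rw [hzero m, mul_zero] at h
    exact (mul_eq_zero.1 h).resolve_right (hpole m)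
  apply hv0
  ext ⟨i, m⟩
  fin_cases i
  exacts [hzero m, hone m]

end Eigenvector

open scoped Matrix.Norms.L2Operator in
theorem norm_eq_one_of_mem_spectrum_Upsw {N : ℕ} [NeZero N] {θ : ℝ} {lam : ℂ}
    (hlam : lam ∈ spectrum ℂ (Upsw N θ)) : ‖lam‖ = 1 :=
  spectrum.norm_eq_one_of_unitary (Upsw_mem_unitary N θ) hlam

/-- for positive `N` and `θ ∈ (0, π/2)`, every eigenvalue `λ` of
`U_psw(θ)` satisfies `1 − (−λ⁻¹/cosθ)ᴺ = (−1)^(N−1)·(1 − (−λ/cosθ)ᴺ)`. -/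
theorem psw_eigenvalue_equation (N : ℕ) [NeZero N]
    (θ : ℝ) (hθ : θ ∈ Set.Ioo 0 (Real.pi / 2))
    (lam : ℂ) (hlam : lam ∈ spectrum ℂ (Upsw N θ)) :
    1 - (-(lam⁻¹ / (Real.cos θ : ℂ))) ^ N
      = (-1 : ℂ) ^ (N - 1) * (1 - (-(lam / (Real.cos θ : ℂ))) ^ N) := by
  have hcos : 0 < Real.cos θ :=
    Real.cos_pos_of_mem_Ioo ⟨by linarith [hθ.1, Real.pi_pos], hθ.2⟩
  have hcos_lt : Real.cos θ < 1 := by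
    have := Real.sin_pos_of_pos_of_lt_pi hθ.1 (by linarith [hθ.2, Real.pi_pos])
    nlinarith [Real.sin_sq_add_cos_sq θ]
  have hnorm := norm_eq_one_of_mem_spectrum_Upsw hlam
  have hlam0 : lam ≠ 0 := norm_ne_zero_iff.1 (by rw [hnorm]; exact one_ne_zero)
  have hpole (n : ZMod N) : lam + Real.cos θ * omegaN N ^ n.val ≠ 0 :=
    add_mul_ne_zero_of_norm_eq_one hnorm (by rw [norm_pow, norm_omegaN, one_pow])
      (by rwa [Complex.norm_real, Real.norm_of_nonneg hcos.le])
  obtain ⟨v, hv0, hv⟩ := Matrix.exists_mulVec_eq_smul_of_mem_spectrum hlam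
  have hprod := Fintype.prod_eq_prod_of_mul_eq_mul_add 1
    (Upsw_eigenvector_coin_zero_ne_zero hv hv0 hlam0 hpole) (Upsw_eigenvector_transfer hv)
  have hleft := prod_add_mul_omegaN_pow_val N (Real.cos θ * lam) 1
  simp only [one_mul] at hleft
  rw [hleft, Finset.prod_mul_distrib, Finset.prod_const, Finset.card_univ, ZMod.card,
    prod_add_mul_omegaN_pow_val] at hprod
  exact eigenvalue_equation_of_prod (NeZero.ne N) hlam0 (Complex.ofReal_ne_zero.2 hcos.ne') hprod
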